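/- For 0 < α ≤ π/4, let T_B = (2 − sin²α)|1⟩⟨1| + (1 + sec²α)|2⟩⟨2|. Then T_B ≥ 0, tr_B[P_α (I ⊗ T_B)] ≥ I₃, and tr T_B = 2 + cos²α + sec²α. Combined with the primal feasible solution R_A = (2−sin²α)|0⟩⟨0| + (1+sec²α)|1⟩⟨1|, the quantum fractional packing number A(K_α) equals 2 + cos²α + sec²α. -/

import Mathlib

open Matrix Kronecker Complex ComplexOrder

noncomputable section

abbrev M3 : Type := Matrix (Fin 3) (Fin 3) ℂ
abbrev M9 : Type := Matrix (Fin 3 × Fin 3) (Fin 3 × Fin 3) ℂ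

/-- |i⟩⟨j| on ℂ³ -/
def ket (i j : Fin 3) : M3 := Matrix.single i j 1

def E (α : ℝ) : M3 := (Real.sin α : ℂ) • ket 0 1 + ket 1 2
def D (α : ℝ) : M3 := (Real.cos α : ℂ) • ket 2 1 + ket 1 0

def u (α : ℝ) : Fin 3 × Fin 3 → ℂ := fun p =>
  (((if p = (1,0) then Real.sin α else 0) + (if p = (2,1) then 1 else 0)) /
    Real.sqrt (1 + Real.sin α ^ 2) : ℝ)

def v (α : ℝ) : Fin 3 × Fin 3 → ℂ := fun p =>
  (((if p = (1,2) then Real.cos α else 0) + (if p = (0,1) then 1 else 0)) /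
    Real.sqrt (1 + Real.cos α ^ 2) : ℝ)

/-- Projection onto span{|u_α⟩, |v_α⟩}, the support of the Choi matrix of N_α. -/
def Pproj (α : ℝ) : M9 :=
  vecMulVec (u α) (star (u α)) + vecMulVec (v α) (star (v α))

/-- Partial trace over the first (A) factor. -/
def trA (M : M9) : M3 := fun i j => ∑ k, M (k, i) (k, j)

/-- Partial trace over the second (B) factor. -/
def trB (M : M9) : M3 := fun i j => ∑ k, M (i, k) (j, k)

def TB (α : ℝ) : M3 :=
  ((2 - Real.sin α ^ 2 : ℝ) : ℂ) • ket 1 1 + ((1 + 1 / Real.cos α ^ 2 : ℝ) : ℂ) • ket 2 2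

/-!
Weak duality: for `R`, `T ≥ 0` with `tr_A[P (R ⊗ I)] ≤ I ≤ tr_B[P (I ⊗ T)]`,
`tr R ≤ tr (R · tr_B[P (I ⊗ T)]) = tr (P (R ⊗ T)) = tr (tr_A[P (R ⊗ I)] · T) ≤ tr T`,
the two inequalities because the trace of a product of positive semidefinite matrices is
nonnegative. For `P = P_α` both partial traces are diagonal when `R`, `T` are, and
`R_A`, `T_B` are feasible as soon as `sin² α ≤ cos² α`; they have the same trace, which is
therefore the optimal value.
-/

open scoped MatrixOrder in
lemma Matrix.PosSemidef.trace_mul_nonneg {n : Type*} [Fintype n] {A B : Matrix n n ℂ}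
    (hA : A.PosSemidef) (hB : B.PosSemidef) : 0 ≤ (A * B).trace := by
  classical
  obtain ⟨X, rfl⟩ := CStarAlgebra.nonneg_iff_eq_star_mul_self.mp hA.nonneg
  rw [star_eq_conjTranspose, Matrix.mul_assoc, trace_mul_comm]
  exact (hB.mul_mul_conjTranspose_same X).trace_nonneg

section DiagonalOfReal

variable {n : Type*} [DecidableEq n] {d : n → ℝ}

lemma posSemidef_diagonal_map_ofReal (h : ∀ i, 0 ≤ d i) :
    ((diagonal d).map ofReal).PosSemidef := by
  rw [diagonal_map Complex.ofReal_zero]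
  exact posSemidef_diagonal_iff.mpr fun i => Complex.zero_le_real.mpr (h i)

lemma posSemidef_diagonal_map_ofReal_sub_one (h : ∀ i, 1 ≤ d i) :
    ((diagonal d).map ofReal - 1 : Matrix n n ℂ).PosSemidef := by
  convert posSemidef_diagonal_map_ofReal (d := d - 1) fun i => sub_nonneg.mpr (h i) using 1
  ext i j
  by_cases hij : i = j <;> simp [hij, one_apply]

lemma posSemidef_one_sub_diagonal_map_ofReal (h : ∀ i, d i ≤ 1) :
    (1 - (diagonal d).map ofReal : Matrix n n ℂ).PosSemidef := by
  convert posSemidef_diagonal_map_ofReal (d := 1 - d) fun i => sub_nonneg.mpr (h i) using 1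
  ext i j
  by_cases hij : i = j <;> simp [hij, one_apply]

end DiagonalOfReal

lemma trace_mul_trB (R : M3) (M : M9) : (R * trB M).trace = ((R ⊗ₖ (1 : M3)) * M).trace := by
  simp only [trace, diag_apply, mul_apply, trB, Finset.mul_sum, kroneckerMap_apply, one_apply,
    mul_ite, mul_one, mul_zero, ite_mul, zero_mul, Fintype.sum_prod_type, Finset.sum_ite_eq,
    Finset.mem_univ, ↓reduceIte]
  exact Finset.sum_congr rfl fun _ _ => Finset.sum_comm

lemma trace_trA_mul (M : M9) (T : M3) : (trA M * T).trace = (M * ((1 : M3) ⊗ₖ T)).trace := by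
  simp only [trace, diag_apply, mul_apply, trA, Finset.sum_mul, kroneckerMap_apply, one_apply,
    ite_mul, one_mul, zero_mul, mul_ite, mul_zero, Fintype.sum_prod_type, Finset.sum_ite_irrel,
    Finset.sum_const_zero, Finset.sum_ite_eq', Finset.mem_univ, ↓reduceIte]
  exact (Finset.sum_congr rfl fun _ _ => Finset.sum_comm).trans Finset.sum_comm

lemma kronecker_one_mul_one_kronecker_comm (R T : M3) :
    (R ⊗ₖ (1 : M3)) * ((1 : M3) ⊗ₖ T) = ((1 : M3) ⊗ₖ T) * (R ⊗ₖ (1 : M3)) := by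
  rw [← mul_kronecker_mul, ← mul_kronecker_mul, Matrix.one_mul, Matrix.mul_one,
    Matrix.one_mul, Matrix.mul_one]

lemma trace_mul_trB_eq_trace_trA_mul (P : M9) (R T : M3) :
    (R * trB (P * ((1 : M3) ⊗ₖ T))).trace = (trA (P * (R ⊗ₖ (1 : M3))) * T).trace := by
  rw [trace_mul_trB, trace_trA_mul, trace_mul_comm, Matrix.mul_assoc,
    ← kronecker_one_mul_one_kronecker_comm, Matrix.mul_assoc]

lemma trace_le_trace_of_feasible (P : M9) {R T : M3} (hR : R.PosSemidef) (hT : T.PosSemidef)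
    (hR_feas : ((1 : M3) - trA (P * (R ⊗ₖ (1 : M3)))).PosSemidef)
    (hT_feas : (trB (P * ((1 : M3) ⊗ₖ T)) - (1 : M3)).PosSemidef) :
    R.trace ≤ T.trace := by
  have hRT := hR.trace_mul_nonneg hT_feas
  have hTR := hR_feas.trace_mul_nonneg hT
  rw [Matrix.mul_sub, trace_sub, sub_nonneg, Matrix.mul_one] at hRT
  rw [Matrix.sub_mul, trace_sub, sub_nonneg, Matrix.one_mul] at hTR
  calc R.trace ≤ (R * trB (P * ((1 : M3) ⊗ₖ T))).trace := hRT
    _ = (trA (P * (R ⊗ₖ (1 : M3))) * T).trace := trace_mul_trB_eq_trace_trA_mul P R T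
    _ ≤ T.trace := hTR

lemma trB_mul_one_kronecker_diagonal (P : M9) (d : Fin 3 → ℂ) (i j : Fin 3) :
    trB (P * ((1 : M3) ⊗ₖ diagonal d)) i j = ∑ k, P (i, k) (j, k) * d k := by
  simp [trB, mul_apply, kroneckerMap_apply, Fintype.sum_prod_type, one_apply, diagonal_apply]

lemma trA_mul_diagonal_kronecker_one (P : M9) (d : Fin 3 → ℂ) (i j : Fin 3) :
    trA (P * (diagonal d ⊗ₖ (1 : M3))) i j = ∑ k, P (k, i) (k, j) * d k := by
  simp [trA, mul_apply, kroneckerMap_apply, Fintype.sum_prod_type, one_apply, diagonal_apply]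

lemma Real.sin_sq_le_cos_sq {α : ℝ} (h₀ : -(Real.pi / 4) ≤ α) (h₁ : α ≤ Real.pi / 4) :
    Real.sin α ^ 2 ≤ Real.cos α ^ 2 := by
  have : 0 ≤ Real.cos (2 * α) := Real.cos_nonneg_of_mem_Icc ⟨by linarith, by linarith⟩
  rw [Real.cos_two_mul'] at this
  linarith

def uNum (α : ℝ) (p : Fin 3 × Fin 3) : ℝ :=
  (if p = (1,0) then Real.sin α else 0) + (if p = (2,1) then 1 else 0)

def vNum (α : ℝ) (p : Fin 3 × Fin 3) : ℝ :=
  (if p = (1,2) then Real.cos α else 0) + (if p = (0,1) then 1 else 0)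

lemma Pproj_apply (α : ℝ) (p q : Fin 3 × Fin 3) :
    Pproj α p q = ((uNum α p * uNum α q / (1 + Real.sin α ^ 2) +
      vNum α p * vNum α q / (1 + Real.cos α ^ 2) : ℝ) : ℂ) := by
  have hs := Real.mul_self_sqrt (by positivity : 0 ≤ 1 + Real.sin α ^ 2)
  have hc := Real.mul_self_sqrt (by positivity : 0 ≤ 1 + Real.cos α ^ 2)
  simp only [Pproj, Matrix.add_apply, vecMulVec_apply, u, v, Pi.star_apply, Complex.star_def,
    Complex.conj_ofReal, ← Complex.ofReal_mul, ← Complex.ofReal_add]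
  rw [div_mul_div_comm, div_mul_div_comm, hs, hc]
  rfl

lemma trB_Pproj_mul_one_kronecker_diagonal (α : ℝ) (d : Fin 3 → ℝ) (i j : Fin 3) :
    trB (Pproj α * ((1 : M3) ⊗ₖ (diagonal d).map ofReal)) i j =
      ((∑ k, (uNum α (i, k) * uNum α (j, k) / (1 + Real.sin α ^ 2) +
        vNum α (i, k) * vNum α (j, k) / (1 + Real.cos α ^ 2)) * d k : ℝ) : ℂ) := by
  rw [diagonal_map Complex.ofReal_zero, trB_mul_one_kronecker_diagonal]
  push_cast [Pproj_apply]
  rfl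

lemma trA_Pproj_mul_diagonal_kronecker_one (α : ℝ) (d : Fin 3 → ℝ) (i j : Fin 3) :
    trA (Pproj α * ((diagonal d).map ofReal ⊗ₖ (1 : M3))) i j =
      ((∑ k, (uNum α (k, i) * uNum α (k, j) / (1 + Real.sin α ^ 2) +
        vNum α (k, i) * vNum α (k, j) / (1 + Real.cos α ^ 2)) * d k : ℝ) : ℂ) := by
  rw [diagonal_map Complex.ofReal_zero, trA_mul_diagonal_kronecker_one]
  push_cast [Pproj_apply]
  rfl

lemma TB_eq_diagonal (α : ℝ) :
    TB α = (diagonal ![0, 2 - Real.sin α ^ 2, 1 + 1 / Real.cos α ^ 2]).map ofReal := by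
  ext i j
  fin_cases i <;> fin_cases j <;> simp [TB, ket]

def RA (α : ℝ) : M3 :=
  (diagonal ![2 - Real.sin α ^ 2, 1 + 1 / Real.cos α ^ 2, 0]).map ofReal

lemma trB_Pproj_TB {α : ℝ} (hc : Real.cos α ≠ 0) :
    trB (Pproj α * ((1 : M3) ⊗ₖ TB α)) =
      (diagonal ![1, 1, (1 + Real.cos α ^ 2) / (1 + Real.sin α ^ 2)]).map ofReal := by
  have hsc := Real.sin_sq_add_cos_sq α
  ext i j
  rw [TB_eq_diagonal, trB_Pproj_mul_one_kronecker_diagonal, map_apply]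
  congr 1
  fin_cases i <;> fin_cases j <;> simp [Fin.sum_univ_three, uNum, vNum] <;> field_simp <;> linarith

lemma trA_Pproj_RA {α : ℝ} (hc : Real.cos α ≠ 0) :
    trA (Pproj α * (RA α ⊗ₖ (1 : M3))) =
      (diagonal ![Real.sin α ^ 2 * (1 + Real.cos α ^ 2) /
        (Real.cos α ^ 2 * (1 + Real.sin α ^ 2)), 1, 1]).map ofReal := by
  have hsc := Real.sin_sq_add_cos_sq α
  ext i j
  rw [RA, trA_Pproj_mul_diagonal_kronecker_one, map_apply]
  congr 1
  fin_cases i <;> fin_cases j <;> simp [Fin.sum_univ_three, uNum, vNum] <;> field_simp <;> linarith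

lemma trace_TB (α : ℝ) :
    (TB α).trace = ((2 + Real.cos α ^ 2 + 1 / Real.cos α ^ 2 : ℝ) : ℂ) := by
  rw [TB_eq_diagonal, diagonal_map Complex.ofReal_zero, trace_diagonal, ← Complex.ofReal_sum,
    Complex.ofReal_inj, Fin.sum_univ_three]
  simp only [cons_val_zero, cons_val_one, cons_val_two, head_cons, tail_cons]
  linarith [Real.sin_sq_add_cos_sq α]

lemma trace_RA (α : ℝ) :
    (RA α).trace = ((2 + Real.cos α ^ 2 + 1 / Real.cos α ^ 2 : ℝ) : ℂ) := by
  rw [RA, diagonal_map Complex.ofReal_zero, trace_diagonal, ← Complex.ofReal_sum,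
    Complex.ofReal_inj, Fin.sum_univ_three]
  simp only [cons_val_zero, cons_val_one, cons_val_two, head_cons, tail_cons]
  linarith [Real.sin_sq_add_cos_sq α]

lemma TB_posSemidef (α : ℝ) : (TB α).PosSemidef := by
  rw [TB_eq_diagonal]
  refine posSemidef_diagonal_map_ofReal fun i => ?_
  fin_cases i
  · exact le_rfl
  · simpa using Real.sin_sq_le_one α |>.trans one_le_two
  · simp only [Fin.reduceFinMk, cons_val_two, head_cons, tail_cons]; positivity

lemma RA_posSemidef (α : ℝ) : (RA α).PosSemidef := by
  refine posSemidef_diagonal_map_ofReal fun i => ?_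
  fin_cases i
  · simpa using Real.sin_sq_le_one α |>.trans one_le_two
  · simp only [Fin.mk_one, cons_val_one, cons_val_zero]; positivity
  · exact le_rfl

lemma TB_dual_feasible {α : ℝ} (hc : Real.cos α ≠ 0)
    (hsc : Real.sin α ^ 2 ≤ Real.cos α ^ 2) :
    (trB (Pproj α * ((1 : M3) ⊗ₖ TB α)) - (1 : M3)).PosSemidef := by
  rw [trB_Pproj_TB hc]
  refine posSemidef_diagonal_map_ofReal_sub_one fun i => ?_
  fin_cases i
  · exact le_rfl
  · exact le_rfl
  · simp only [Fin.reduceFinMk, cons_val_two, head_cons, tail_cons]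
    rw [one_le_div (by positivity)]
    linarith

lemma RA_primal_feasible {α : ℝ} (hc : Real.cos α ≠ 0)
    (hsc : Real.sin α ^ 2 ≤ Real.cos α ^ 2) :
    ((1 : M3) - trA (Pproj α * (RA α ⊗ₖ (1 : M3)))).PosSemidef := by
  rw [trA_Pproj_RA hc]
  refine posSemidef_one_sub_diagonal_map_ofReal fun i => ?_
  fin_cases i
  · simp only [Fin.zero_eta, cons_val_zero]
    rw [div_le_one (by positivity)]
    nlinarith
  · exact le_rfl
  · exact le_rfl

/-- Dual feasibility of T_B and the value of the quantum fractional packing number. -/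
theorem packing_number (α : ℝ) (hα : 0 < α) (hα' : α ≤ Real.pi / 4) :
    (TB α).PosSemidef ∧
    (trB (Pproj α * ((1 : M3) ⊗ₖ TB α)) - (1 : M3)).PosSemidef ∧
    (TB α).trace = ((2 + Real.cos α ^ 2 + 1 / Real.cos α ^ 2 : ℝ) : ℂ) ∧
    IsGreatest {x : ℝ | ∃ R : M3, R.PosSemidef ∧
        ((1 : M3) - trA (Pproj α * (R ⊗ₖ (1 : M3)))).PosSemidef ∧ x = (R.trace).re}
      (2 + Real.cos α ^ 2 + 1 / Real.cos α ^ 2) := by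
  have hc : Real.cos α ≠ 0 :=
    (Real.cos_pos_of_mem_Ioo ⟨by linarith [Real.pi_pos], by linarith [Real.pi_pos]⟩).ne'
  have hsc : Real.sin α ^ 2 ≤ Real.cos α ^ 2 := Real.sin_sq_le_cos_sq (by linarith) hα'
  have hT_feas := TB_dual_feasible hc hsc
  refine ⟨TB_posSemidef α, hT_feas, trace_TB α,
    ⟨RA α, RA_posSemidef α, RA_primal_feasible hc hsc,
      by rw [trace_RA, Complex.ofReal_re]⟩, ?_⟩
  rintro _ ⟨R, hR, hR_feas, rfl⟩
  have h := trace_le_trace_of_feasible (Pproj α) hR (TB_posSemidef α) hR_feas hT_feas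
  rw [trace_TB] at h
  simpa only [Complex.ofReal_re] using (Complex.le_def.mp h).1
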